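/- Let φ : K → L be a geometric and dense morphism of ⊗-triangulated categories, and let C ∈ Spc(L). Define Φ(C) to be the intersection of all ⊗-thick subcategories H ⊆ K such that C ⊆ ⟨φ(H)⟩. Then Φ(C) is a nonzero atomic ⊗-thick subcategory of K, and moreover C ⊆ ⟨φ(Φ(C))⟩. -/

import Mathlib

namespace Balmer

open CategoryTheory CategoryTheory.Limits CategoryTheory.Pretriangulated ZeroObject

universe v u v' u'

variable {K : Type u} [Category.{v} K] [Preadditive K] [HasZeroObject K] [HasShift K ℤ]
  [∀ n : ℤ, (shiftFunctor K n).Additive] [Pretriangulated K] [HasBinaryBiproducts K]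

/-- A `⊗`-thick subcategory of `K` (identified with its set of objects):
a full triangulated subcategory, closed under isomorphisms, translations, cones and
direct summands, which is moreover an ideal for the tensor product on both sides. -/
def IsTensorThick (tensor : K ⥤ K ⥤ K) (S : Set K) : Prop :=
  (0 : K) ∈ S ∧
  (∀ ⦃a b : K⦄, (a ≅ b) → a ∈ S → b ∈ S) ∧
  (∀ a ∈ S, ∀ n : ℤ, (shiftFunctor K n).obj a ∈ S) ∧
  (∀ T ∈ (distTriang K), T.obj₁ ∈ S → T.obj₂ ∈ S → T.obj₃ ∈ S) ∧
  (∀ a b : K, (a ⊞ b) ∈ S → a ∈ S ∧ b ∈ S) ∧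
  (∀ a ∈ S, ∀ b : K, (tensor.obj a).obj b ∈ S ∧ (tensor.obj b).obj a ∈ S)

/-- `⟨D⟩`, the smallest `⊗`-thick subcategory of `K` containing `D`. -/
def tensorSpan (tensor : K ⥤ K ⥤ K) (D : Set K) : Set K :=
  ⋂₀ {S : Set K | IsTensorThick tensor S ∧ D ⊆ S}

/-- A `⊗`-thick subcategory `A` is atomic if whenever `A ⊆ ⟨D⟩` for a collection of
objects `D`, there is some `d ∈ D` with `A ⊆ ⟨d⟩`. -/
def IsAtomic (tensor : K ⥤ K ⥤ K) (A : Set K) : Prop :=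
  IsTensorThick tensor A ∧
    ∀ D : Set K, A ⊆ tensorSpan tensor D → ∃ d ∈ D, A ⊆ tensorSpan tensor {d}

/-- The spectrum `Spc(K,⊗)`: the collection of all nonzero atomic `⊗`-thick
subcategories of `K`. -/
def Spc (tensor : K ⥤ K ⥤ K) : Set (Set K) :=
  {A | IsAtomic tensor A ∧ ∃ a ∈ A, ¬ IsZero a}

variable {L : Type u'} [Category.{v'} L] [Preadditive L] [HasZeroObject L] [HasShift L ℤ]
  [∀ n : ℤ, (shiftFunctor L n).Additive] [Pretriangulated L] [HasBinaryBiproducts L]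

/-- A morphism `φ` of `⊗`-triangulated categories is geometric if `⟨φ(-)⟩`
commutes with arbitrary intersections of `⊗`-thick subcategories. -/
def IsGeometric (tensorK : K ⥤ K ⥤ K) (tensorL : L ⥤ L ⥤ L) (φ : K ⥤ L) : Prop :=
  ∀ 𝒞 : Set (Set K), (∀ C ∈ 𝒞, IsTensorThick tensorK C) →
    tensorSpan tensorL (φ.obj '' ⋂₀ 𝒞) = ⋂ C ∈ 𝒞, tensorSpan tensorL (φ.obj '' C)

/-- A morphism `φ` of `⊗`-triangulated categories is dense if `⟨φ(K)⟩ = L`. -/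
def IsDense (tensorL : L ⥤ L ⥤ L) (φ : K ⥤ L) : Prop :=
  tensorSpan tensorL (Set.range φ.obj) = Set.univ

/-- The map `Φ = Spc(φ)` underlying a geometric and dense morphism `φ`:
`Φ(C)` is the intersection of all `⊗`-thick subcategories `H ⊆ K` such that
`C ⊆ ⟨φ(H)⟩`. -/
def PhiMap (tensorK : K ⥤ K ⥤ K) (tensorL : L ⥤ L ⥤ L) (φ : K ⥤ L) (C : Set L) : Set K :=
  ⋂₀ {H : Set K | IsTensorThick tensorK H ∧ C ⊆ tensorSpan tensorL (φ.obj '' H)}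

section TensorThick

variable (tensor : K ⥤ K ⥤ K)

lemma isTensorThick_sInter {𝒮 : Set (Set K)} (h : ∀ S ∈ 𝒮, IsTensorThick tensor S) :
    IsTensorThick tensor (⋂₀ 𝒮) := by
  refine ⟨fun S hS => (h S hS).1, ?_, ?_, ?_, ?_, ?_⟩
  · exact fun a b e ha S hS => (h S hS).2.1 e (ha S hS)
  · exact fun a ha n S hS => (h S hS).2.2.1 a (ha S hS) n
  · exact fun T hT h₁ h₂ S hS => (h S hS).2.2.2.1 T hT (h₁ S hS) (h₂ S hS)
  · exact fun a b hab => ⟨fun S hS => ((h S hS).2.2.2.2.1 a b (hab S hS)).1,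
      fun S hS => ((h S hS).2.2.2.2.1 a b (hab S hS)).2⟩
  · exact fun a ha b => ⟨fun S hS => ((h S hS).2.2.2.2.2 a (ha S hS) b).1,
      fun S hS => ((h S hS).2.2.2.2.2 a (ha S hS) b).2⟩

lemma isTensorThick_tensorSpan (D : Set K) : IsTensorThick tensor (tensorSpan tensor D) :=
  isTensorThick_sInter tensor fun _ hS => hS.1

lemma subset_tensorSpan (D : Set K) : D ⊆ tensorSpan tensor D :=
  fun _ ha _ hS => hS.2 ha

lemma tensorSpan_subset {D S : Set K} (hS : IsTensorThick tensor S) (h : D ⊆ S) :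
    tensorSpan tensor D ⊆ S :=
  fun _ ha => ha S ⟨hS, h⟩

lemma tensorSpan_mono {D D' : Set K} (h : D ⊆ D') :
    tensorSpan tensor D ⊆ tensorSpan tensor D' :=
  tensorSpan_subset tensor (isTensorThick_tensorSpan tensor D')
    (h.trans (subset_tensorSpan tensor D'))

lemma IsTensorThick.mem_of_isZero {S : Set K} (hS : IsTensorThick tensor S) {a : K}
    (ha : IsZero a) : a ∈ S :=
  hS.2.1 ((isZero_zero K).iso ha) hS.1

lemma IsAtomic.not_subset_tensorSpan_empty {A : Set K} (hA : IsAtomic tensor A) :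
    ¬ A ⊆ tensorSpan tensor ∅ :=
  fun h => let ⟨_, hd, _⟩ := hA.2 ∅ h; hd

/-- With `D = ∅` in the definition, an atomic subcategory cannot consist of zero objects only,
since those lie in `⟨∅⟩`. -/
lemma IsAtomic.mem_spc {A : Set K} (hA : IsAtomic tensor A) : A ∈ Spc tensor := by
  refine ⟨hA, ?_⟩
  by_contra! hzero
  exact hA.not_subset_tensorSpan_empty tensor fun a ha =>
    (isTensorThick_tensorSpan tensor ∅).mem_of_isZero tensor (hzero a ha)

end TensorThick

section TensorFunctor

variable {tensorK : K ⥤ K ⥤ K} {tensorL : L ⥤ L ⥤ L} {φ : K ⥤ L} [φ.CommShift ℤ]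
  [φ.IsTriangulated]

lemma IsTensorThick.preimage
    (e : ∀ a b : K, φ.obj ((tensorK.obj a).obj b) ≅ (tensorL.obj (φ.obj a)).obj (φ.obj b))
    {S : Set L} (hS : IsTensorThick tensorL S) :
    IsTensorThick tensorK (φ.obj ⁻¹' S) := by
  obtain ⟨hzero, hiso, hshift, hcone, hsummand, hideal⟩ := hS
  have : PreservesBinaryBiproducts φ := preservesBinaryBiproducts_of_preservesBiproducts φ
  refine ⟨hiso ((isZero_zero L).iso (φ.map_isZero (isZero_zero K))) hzero, ?_, ?_, ?_, ?_, ?_⟩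
  · exact fun x y exy hx => hiso (φ.mapIso exy) hx
  · exact fun x hx n => hiso ((φ.commShiftIso n).app x).symm (hshift _ hx n)
  · exact fun T hT h₁ h₂ => hcone (φ.mapTriangle.obj T) (φ.map_distinguished T hT) h₁ h₂
  · exact fun x y hxy => hsummand (φ.obj x) (φ.obj y) (hiso (φ.mapBiprod x y) hxy)
  · exact fun x hx y => ⟨hiso (e x y).symm (hideal (φ.obj x) hx (φ.obj y)).1,
      hiso (e y x).symm (hideal (φ.obj x) hx (φ.obj y)).2⟩

lemma image_tensorSpan_subset
    (e : ∀ a b : K, φ.obj ((tensorK.obj a).obj b) ≅ (tensorL.obj (φ.obj a)).obj (φ.obj b))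
    (D : Set K) :
    φ.obj '' tensorSpan tensorK D ⊆ tensorSpan tensorL (φ.obj '' D) :=
  Set.image_subset_iff.2 <| tensorSpan_subset tensorK
    ((isTensorThick_tensorSpan tensorL _).preimage e)
    (Set.image_subset_iff.1 (subset_tensorSpan tensorL _))

lemma image_tensorSpan_subset_tensorSpan
    (e : ∀ a b : K, φ.obj ((tensorK.obj a).obj b) ≅ (tensorL.obj (φ.obj a)).obj (φ.obj b))
    (D : Set K) :
    tensorSpan tensorL (φ.obj '' tensorSpan tensorK D) ⊆ tensorSpan tensorL (φ.obj '' D) :=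
  tensorSpan_subset tensorL (isTensorThick_tensorSpan tensorL _) (image_tensorSpan_subset e D)

end TensorFunctor

section PhiMap

variable {tensorK : K ⥤ K ⥤ K} {tensorL : L ⥤ L ⥤ L} {φ : K ⥤ L} {C : Set L}

lemma isTensorThick_phiMap : IsTensorThick tensorK (PhiMap tensorK tensorL φ C) :=
  isTensorThick_sInter tensorK fun _ hH => hH.1

lemma phiMap_subset {H : Set K} (hH : IsTensorThick tensorK H)
    (hC : C ⊆ tensorSpan tensorL (φ.obj '' H)) : PhiMap tensorK tensorL φ C ⊆ H :=
  Set.sInter_subset_of_mem ⟨hH, hC⟩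

lemma subset_tensorSpan_image_phiMap (hgeo : IsGeometric tensorK tensorL φ) :
    C ⊆ tensorSpan tensorL (φ.obj '' PhiMap tensorK tensorL φ C) := by
  rw [PhiMap, hgeo _ fun _ hH => hH.1]
  exact Set.subset_iInter₂ fun _ hH => hH.2

/-- If `Φ(C) ⊆ ⟨D⟩` then `C ⊆ ⟨φ(Φ(C))⟩ ⊆ ⟨φ(D)⟩`, so atomicity of `C` yields `d ∈ D` with
`C ⊆ ⟨φ(d)⟩ ⊆ ⟨φ⟨d⟩⟩`, and minimality of `Φ(C)` gives `Φ(C) ⊆ ⟨d⟩`. -/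
lemma isAtomic_phiMap [φ.CommShift ℤ] [φ.IsTriangulated]
    (e : ∀ a b : K, φ.obj ((tensorK.obj a).obj b) ≅ (tensorL.obj (φ.obj a)).obj (φ.obj b))
    (hgeo : IsGeometric tensorK tensorL φ) (hC : IsAtomic tensorL C) :
    IsAtomic tensorK (PhiMap tensorK tensorL φ C) := by
  refine ⟨isTensorThick_phiMap, fun D hD => ?_⟩
  have hCD : C ⊆ tensorSpan tensorL (φ.obj '' D) :=
    (subset_tensorSpan_image_phiMap hgeo).trans <|
      (tensorSpan_mono tensorL (Set.image_mono hD)).trans (image_tensorSpan_subset_tensorSpan e D)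
  obtain ⟨_, ⟨d, hd, rfl⟩, hCd⟩ := hC.2 _ hCD
  refine ⟨d, hd, phiMap_subset (isTensorThick_tensorSpan tensorK {d}) (hCd.trans ?_)⟩
  refine tensorSpan_mono tensorL ?_
  rw [Set.singleton_subset_iff]
  exact Set.mem_image_of_mem _ (subset_tensorSpan tensorK {d} rfl)

end PhiMap

/-- Proposition 4.6: for a geometric and dense morphism `φ : K ⥤ L` and
`C ∈ Spc(L)`, the subcategory `Φ(C)` is a nonzero atomic `⊗`-thick subcategory of `K`,
and moreover `C ⊆ ⟨φ(Φ(C))⟩`. -/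
theorem stmt8 (tensorK : K ⥤ K ⥤ K) (tensorL : L ⥤ L ⥤ L)
    [∀ a : K, (tensorK.obj a).CommShift ℤ] [∀ a : K, (tensorK.obj a).IsTriangulated]
    [∀ b : K, (tensorK.flip.obj b).CommShift ℤ] [∀ b : K, (tensorK.flip.obj b).IsTriangulated]
    [∀ a : L, (tensorL.obj a).CommShift ℤ] [∀ a : L, (tensorL.obj a).IsTriangulated]
    [∀ b : L, (tensorL.flip.obj b).CommShift ℤ] [∀ b : L, (tensorL.flip.obj b).IsTriangulated]
    (φ : K ⥤ L) [φ.CommShift ℤ] [φ.IsTriangulated]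
    (e : ∀ a b : K, φ.obj ((tensorK.obj a).obj b) ≅ (tensorL.obj (φ.obj a)).obj (φ.obj b))
    (hgeo : IsGeometric tensorK tensorL φ) (hdense : IsDense tensorL φ)
    (C : Set L) (hC : C ∈ Spc tensorL) :
    PhiMap tensorK tensorL φ C ∈ Spc tensorK ∧
      C ⊆ tensorSpan tensorL (φ.obj '' PhiMap tensorK tensorL φ C) :=
  ⟨(isAtomic_phiMap e hgeo hC.1).mem_spc, subset_tensorSpan_image_phiMap hgeo⟩

end Balmer
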